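/- Let A be an m×n real matrix, B an n×m real matrix, and p = min(m,n). Then there exist matrices V ∈ ℝ^{m×p} and U ∈ ℝ^{n×p} with orthonormal columns, and upper Hessenberg matrices H, F ∈ ℝ^{p×p} with nonnegative subdiagonal entries, such that Vᵀ A U = H and Uᵀ B V = F. -/

import Mathlib

/-!
Run a coupled Lanczos (Golub–Kahan type) process. Having built orthonormal `u₀, …, u_k` and
`v₀, …, v_k`, take for `v_{k+1}` the normalized component of `A u_k` orthogonal to `v₀, …, v_k`,
or any unit vector orthogonal to them when that component vanishes; symmetrically `u_{k+1}` comes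
from `B v_k`. Then `A u_j ∈ span {v₀, …, v_{j+1}}` with coefficient `⟪v_{j+1}, A u_j⟫ ≥ 0`, which
is exactly the nonnegative-subdiagonal Hessenberg shape of `Vᵀ A U`; likewise for `Uᵀ B V`.
The process never stops before `min m n` steps because a proper subspace has a nonzero
orthogonal complement.
-/

open Matrix

open WithLp Module Submodule Set
open scoped InnerProductSpace RealInnerProductSpace

def IsNonnegHessenberg {p : ℕ} (H : Matrix (Fin p) (Fin p) ℝ) : Prop :=
  (∀ i j : Fin p, (j : ℕ) + 1 < i → H i j = 0) ∧ ∀ i j : Fin p, (i : ℕ) = j + 1 → 0 ≤ H i j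

section InnerProductSpace

variable {E F : Type*} [NormedAddCommGroup E] [InnerProductSpace ℝ E]
  [NormedAddCommGroup F] [InnerProductSpace ℝ F]

theorem Submodule.exists_mem_norm_eq_one_eq_norm_smul {W : Submodule ℝ E} (hW : W ≠ ⊥) {r : E}
    (hr : r ∈ W) : ∃ x ∈ W, ‖x‖ = 1 ∧ r = ‖r‖ • x := by
  by_cases h : r = 0
  · obtain ⟨z, hzW, hz⟩ := exists_mem_ne_zero_of_ne_bot hW
    exact ⟨‖z‖⁻¹ • z, W.smul_mem _ hzW, norm_smul_inv_norm hz, by simp [h]⟩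
  · exact ⟨‖r‖⁻¹ • r, W.smul_mem _ hr, norm_smul_inv_norm h,
      (smul_inv_smul₀ (norm_ne_zero_iff.mpr h) r).symm⟩

theorem Submodule.exists_mem_orthogonal_norm_eq_one_inner_nonneg (K : Submodule ℝ E)
    [K.HasOrthogonalProjection] (hK : K ≠ ⊤) (t : E) :
    ∃ x ∈ Kᗮ, ‖x‖ = 1 ∧ t ∈ span ℝ {x} ⊔ K ∧ 0 ≤ ⟪x, t⟫ := by
  obtain ⟨x, hxK, hx1, hr⟩ := exists_mem_norm_eq_one_eq_norm_smul
    (mt K.orthogonal_eq_bot_iff.mp hK) (K.sub_starProjection_mem_orthogonal t)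
  have ht : t = ‖t - K.starProjection t‖ • x + K.starProjection t := by rw [← hr]; abel
  refine ⟨x, hxK, hx1, ?_, ?_⟩
  · rw [ht]
    exact add_mem_sup (smul_mem _ _ (mem_span_singleton_self x)) (K.starProjection_apply_mem t)
  · rw [ht, inner_add_right, inner_smul_right, real_inner_self_eq_norm_sq, hx1,
      K.inner_left_of_mem_orthogonal (K.starProjection_apply_mem t) hxK]
    simp

theorem Orthonormal.snoc {k : ℕ} {v : Fin k → E} (hv : Orthonormal ℝ v) {x : E}
    (hx : x ∈ (span ℝ (range v))ᗮ) (hx1 : ‖x‖ = 1) :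
    Orthonormal ℝ (Fin.snoc v x : Fin (k + 1) → E) := by
  have hxv (j : Fin k) : ⟪x, v j⟫ = 0 :=
    inner_left_of_mem_orthogonal (subset_span (mem_range_self j)) hx
  refine ⟨fun i => ?_, fun i j hij => ?_⟩
  · induction i using Fin.lastCases <;> simp [hx1, hv.1 _]
  · induction i using Fin.lastCases <;> induction j using Fin.lastCases
    · exact absurd rfl hij
    · simp [hxv]
    · simp [real_inner_comm, hxv]
    · simpa using hv.2 (fun h => hij (congrArg _ h))

/-- The span condition, on all but the last `u j`, is what lets the next pair of vectors keep the
compression Hessenberg. -/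
def IsHessenbergPair (A : E →ₗ[ℝ] F) {k : ℕ} (u : Fin (k + 1) → E) (v : Fin (k + 1) → F) :
    Prop :=
  (∀ j : Fin k, A (u j.castSucc) ∈ span ℝ (range v)) ∧
    IsNonnegHessenberg (Matrix.of fun i j => ⟪v i, A (u j)⟫)

theorem IsHessenbergPair.snoc {A : E →ₗ[ℝ] F} {k : ℕ} {u : Fin (k + 1) → E}
    {v : Fin (k + 1) → F} (h : IsHessenbergPair A u v) {x : F}
    (hx : x ∈ (span ℝ (range v))ᗮ) (hxA : A (u (Fin.last k)) ∈ span ℝ {x} ⊔ span ℝ (range v))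
    (hxA_nonneg : 0 ≤ ⟪x, A (u (Fin.last k))⟫) (y : E) :
    IsHessenbergPair A (Fin.snoc u y) (Fin.snoc v x) := by
  obtain ⟨hspan, hzero, hnonneg⟩ := h
  have hxAu (j : Fin k) : ⟪x, A (u j.castSucc)⟫ = 0 :=
    inner_left_of_mem_orthogonal (hspan j) hx
  refine ⟨fun j => ?_, fun i j hij => ?_, fun i j hij => ?_⟩
  · rw [Fin.range_snoc, span_insert]
    induction j using Fin.lastCases with
    | last => simpa using hxA
    | cast j => simpa using mem_sup_right (hspan j)
  · induction i using Fin.lastCases with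
    | last =>
      induction j using Fin.lastCases with
      | last => simp at hij
      | cast j =>
        induction j using Fin.lastCases with
        | last => simp at hij
        | cast j => simpa using hxAu j
    | cast i =>
      induction j using Fin.lastCases with
      | last => simp at hij; omega
      | cast j => simpa using hzero i j (by simpa using hij)
  · induction i using Fin.lastCases with
    | last =>
      induction j using Fin.lastCases with
      | last => simp at hij
      | cast j =>
        induction j using Fin.lastCases with
        | last => simpa using hxA_nonneg
        | cast j => simp at hij; omega
    | cast i =>
      induction j using Fin.lastCases with
      | last => simp at hij; omega
      | cast j => simpa using hnonneg i j (by simpa using hij)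

theorem span_range_ne_top_of_lt_finrank {k : ℕ} (v : Fin k → F) (hk : k < finrank ℝ F) :
    span ℝ (range v) ≠ ⊤ := by
  intro h
  have := finrank_range_le_card (R := ℝ) v
  rw [Set.finrank, h, finrank_top, Fintype.card_fin] at this
  omega

variable [FiniteDimensional ℝ E] [FiniteDimensional ℝ F]

theorem exists_orthonormal_isHessenbergPair (A : E →ₗ[ℝ] F) (B : F →ₗ[ℝ] E) (k : ℕ)
    (hE : k < finrank ℝ E) (hF : k < finrank ℝ F) :
    ∃ (u : Fin (k + 1) → E) (v : Fin (k + 1) → F), Orthonormal ℝ u ∧ Orthonormal ℝ v ∧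
      IsHessenbergPair A u v ∧ IsHessenbergPair B v u := by
  induction k with
  | zero =>
    have : Nontrivial E := nontrivial_of_finrank_pos hE
    have : Nontrivial F := nontrivial_of_finrank_pos hF
    obtain ⟨u, hu⟩ := exists_norm_eq E zero_le_one
    obtain ⟨v, hv⟩ := exists_norm_eq F zero_le_one
    have hHess {H : Matrix (Fin 1) (Fin 1) ℝ} : IsNonnegHessenberg H :=
      ⟨fun i j h => by omega, fun i j h => by omega⟩
    exact ⟨fun _ => u, fun _ => v, ⟨fun _ => hu, Subsingleton.pairwise (α := Fin 1)⟩,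
      ⟨fun _ => hv, Subsingleton.pairwise (α := Fin 1)⟩, ⟨Fin.elim0, hHess⟩, ⟨Fin.elim0, hHess⟩⟩
  | succ k ih =>
    obtain ⟨u, v, hu, hv, hA, hB⟩ := ih (by omega) (by omega)
    obtain ⟨x, hx, hx1, hxA, hxA_nonneg⟩ := exists_mem_orthogonal_norm_eq_one_inner_nonneg
      (span ℝ (range v)) (span_range_ne_top_of_lt_finrank v hF) (A (u (Fin.last k)))
    obtain ⟨y, hy, hy1, hyB, hyB_nonneg⟩ := exists_mem_orthogonal_norm_eq_one_inner_nonneg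
      (span ℝ (range u)) (span_range_ne_top_of_lt_finrank u hE) (B (v (Fin.last k)))
    exact ⟨Fin.snoc u y, Fin.snoc v x, hu.snoc hy hy1, hv.snoc hx hx1,
      hA.snoc hx hxA hxA_nonneg y, hB.snoc hy hyB hyB_nonneg x⟩

theorem exists_orthonormal_nonnegHessenberg (A : E →ₗ[ℝ] F) (B : F →ₗ[ℝ] E) (p : ℕ)
    (hE : p ≤ finrank ℝ E) (hF : p ≤ finrank ℝ F) :
    ∃ (u : Fin p → E) (v : Fin p → F), Orthonormal ℝ u ∧ Orthonormal ℝ v ∧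
      IsNonnegHessenberg (Matrix.of fun i j => ⟪v i, A (u j)⟫) ∧
      IsNonnegHessenberg (Matrix.of fun i j => ⟪u i, B (v j)⟫) := by
  cases p with
  | zero =>
    have hHess {H : Matrix (Fin 0) (Fin 0) ℝ} : IsNonnegHessenberg H :=
      ⟨fun i => i.elim0, fun i => i.elim0⟩
    exact ⟨Fin.elim0, Fin.elim0, ⟨fun i => i.elim0, fun i => i.elim0⟩,
      ⟨fun i => i.elim0, fun i => i.elim0⟩, hHess, hHess⟩
  | succ k =>
    obtain ⟨u, v, hu, hv, hA, hB⟩ := exists_orthonormal_isHessenbergPair A B k hE hF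
    exact ⟨u, v, hu, hv, hA.2, hB.2⟩

end InnerProductSpace

section Matrix

variable {l m n o : Type*} [Fintype m] [Fintype n] [DecidableEq n]

theorem of_mul_mul_transpose_of_apply (A : Matrix m n ℝ) (v : l → EuclideanSpace ℝ m)
    (u : o → EuclideanSpace ℝ n) (i : l) (j : o) :
    (of (fun i => ofLp (v i)) * A * (of fun j => ofLp (u j))ᵀ) i j =
      ⟪v i, toLpLin 2 2 A (u j)⟫ := by
  simp only [EuclideanSpace.inner_eq_star_dotProduct, toLpLin_apply, star_trivial,
    mul_apply, dotProduct, mulVec, of_apply, transpose_apply, Finset.sum_mul]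
  rw [Finset.sum_comm]
  exact Finset.sum_congr rfl fun _ _ => Finset.sum_congr rfl fun _ _ => by ring

theorem Orthonormal.of_mul_transpose_of [Fintype l] [DecidableEq l] [DecidableEq m]
    {v : l → EuclideanSpace ℝ m} (hv : Orthonormal ℝ v) :
    of (fun i => ofLp (v i)) * (of fun i => ofLp (v i))ᵀ = 1 := by
  ext i j
  have h := of_mul_mul_transpose_of_apply 1 v v i j
  rw [Matrix.mul_one, toLpLin_one, LinearMap.id_apply] at h
  rw [h, one_apply]
  exact orthonormal_iff_ite.mp hv i j

end Matrix

theorem stmt0 (m n : ℕ) (A : Matrix (Fin m) (Fin n) ℝ) (B : Matrix (Fin n) (Fin m) ℝ) :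
    ∃ (V : Matrix (Fin m) (Fin (min m n)) ℝ) (U : Matrix (Fin n) (Fin (min m n)) ℝ)
      (H F : Matrix (Fin (min m n)) (Fin (min m n)) ℝ),
      Vᵀ * V = 1 ∧ Uᵀ * U = 1 ∧
      (∀ i j : Fin (min m n), (j : ℕ) + 1 < (i : ℕ) → H i j = 0) ∧
      (∀ i j : Fin (min m n), (j : ℕ) + 1 < (i : ℕ) → F i j = 0) ∧
      (∀ i j : Fin (min m n), (i : ℕ) = (j : ℕ) + 1 → 0 ≤ H i j) ∧
      (∀ i j : Fin (min m n), (i : ℕ) = (j : ℕ) + 1 → 0 ≤ F i j) ∧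
      Vᵀ * A * U = H ∧ Uᵀ * B * V = F := by
  obtain ⟨u, v, hu, hv, ⟨hA_zero, hA_nonneg⟩, ⟨hB_zero, hB_nonneg⟩⟩ :=
    exists_orthonormal_nonnegHessenberg (E := EuclideanSpace ℝ (Fin n))
      (F := EuclideanSpace ℝ (Fin m)) (toLpLin 2 2 A) (toLpLin 2 2 B) (min m n)
      (by simp) (by simp)
  refine ⟨(of fun i => ofLp (v i))ᵀ, (of fun i => ofLp (u i))ᵀ, _, _,
    by simpa using hv.of_mul_transpose_of, by simpa using hu.of_mul_transpose_of,
    hA_zero, hB_zero, hA_nonneg, hB_nonneg, ?_, ?_⟩ <;>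
  ext i j <;> simp [of_mul_mul_transpose_of_apply]
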